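/- arXiv:2407.02019 — 3 statements merged into one kernel-verified Lean document; each statement's English description precedes it below -/
import Mathlib

section
/- Let μ₁ and μ₂ be finite Borel measures on a compact subset F of a separable real Hilbert space H. If ∫_F f^a dμ₁(f) = ∫_F f^a dμ₂(f) for all a ∈ c_0(ℕ), then μ₁ = μ₂. -/
open MeasureTheory
open scoped RealInnerProductSpace

section Aux

variable {H : Type*} [NormedAddCommGroup H] [InnerProductSpace ℝ H]

/-- Monomials multiply: exponents add. -/
lemma monomial_mul (b : ℕ → H) (a₁ a₂ : ℕ →₀ ℕ) (x : H) :
    (∏ k ∈ (a₁ + a₂).support, ⟪x, b k⟫ ^ (a₁ + a₂) k) =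
      (∏ k ∈ a₁.support, ⟪x, b k⟫ ^ a₁ k) * (∏ k ∈ a₂.support, ⟪x, b k⟫ ^ a₂ k) := by
  have h := Finsupp.prod_add_index' (f := a₁) (g := a₂)
    (h := fun k n => ⟪x, b k⟫ ^ n) (fun k => pow_zero _) (fun k m n => pow_add _ _ _)
  simpa [Finsupp.prod] using h

/-- Every continuous function on a compact space is integrable w.r.t. a finite measure. -/
lemma ContinuousMap.integrable_of_compact {X : Type*} [TopologicalSpace X] [CompactSpace X]
    [MeasurableSpace X] [OpensMeasurableSpace X] (ν : Measure X) [IsFiniteMeasure ν]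
    (g : C(X, ℝ)) : Integrable g ν := by
  have := (BoundedContinuousFunction.mkOfCompact g).integrable ν
  exact this

end Aux

/-- Two finite Borel measures supported on a compact subset `F` of a separable real
Hilbert space having the same moments `∫ Π_k ⟨f, e_k⟩^{a_k} dμ` for all finitely
supported `a` are equal. -/
theorem measure_eq_of_moments_eq
    {H : Type*} [NormedAddCommGroup H] [InnerProductSpace ℝ H] [CompleteSpace H]
    [MeasurableSpace H] [BorelSpace H]
    (b : HilbertBasis ℕ ℝ H) (F : Set H) (hF : IsCompact F)
    (μ₁ μ₂ : Measure H) [IsFiniteMeasure μ₁] [IsFiniteMeasure μ₂]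
    (hμ₁ : μ₁ Fᶜ = 0) (hμ₂ : μ₂ Fᶜ = 0)
    (hmom : ∀ a : ℕ →₀ ℕ,
      ∫ f, (∏ k ∈ a.support, ⟪f, b k⟫ ^ a k) ∂μ₁ =
      ∫ f, (∏ k ∈ a.support, ⟪f, b k⟫ ^ a k) ∂μ₂) :
    μ₁ = μ₂ := by
  have hFc : IsClosed F := hF.isClosed
  have hFm : MeasurableSet F := hFc.measurableSet
  haveI : CompactSpace F := isCompact_iff_compactSpace.mp hF
  have hemb : MeasurableEmbedding (Subtype.val : F → H) :=
    MeasurableEmbedding.subtype_coe hFm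
  set ν₁ : Measure F := Measure.comap Subtype.val μ₁ with hν₁def
  set ν₂ : Measure F := Measure.comap Subtype.val μ₂ with hν₂def
  have hmap₁ : ν₁.map Subtype.val = μ₁ := by
    rw [hν₁def, hemb.map_comap, Subtype.range_coe,
      Measure.restrict_eq_self_of_ae_mem]
    exact (ae_iff.2 hμ₁)
  have hmap₂ : ν₂.map Subtype.val = μ₂ := by
    rw [hν₂def, hemb.map_comap, Subtype.range_coe,
      Measure.restrict_eq_self_of_ae_mem]
    exact (ae_iff.2 hμ₂)
  haveI : IsFiniteMeasure ν₁ := by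
    constructor
    rw [hν₁def, hemb.comap_apply]
    exact (measure_mono (Set.subset_univ _)).trans_lt (measure_lt_top μ₁ _)
  haveI : IsFiniteMeasure ν₂ := by
    constructor
    rw [hν₂def, hemb.comap_apply]
    exact (measure_mono (Set.subset_univ _)).trans_lt (measure_lt_top μ₂ _)
  -- coordinate functions on F
  have hcoordcont : ∀ k : ℕ, Continuous fun x : F => ⟪(x : H), b k⟫ :=
    fun k => (continuous_subtype_val.inner continuous_const)
  set coord : ℕ → C(F, ℝ) := fun k => ⟨fun x => ⟪(x : H), b k⟫, hcoordcont k⟩ with hcoord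
  set A : Subalgebra ℝ C(F, ℝ) := Algebra.adjoin ℝ (Set.range coord) with hA
  -- A separates points
  have hsep : A.SeparatesPoints := by
    intro x y hxy
    have : ∃ k, ⟪(x : H), b k⟫ ≠ ⟪(y : H), b k⟫ := by
      by_contra h
      push_neg at h
      apply hxy
      have hrepr : b.repr (x : H) = b.repr (y : H) := by
        ext k
        rw [b.repr_apply_apply, b.repr_apply_apply]
        have hk := h k
        conv at hk => lhs; rw [real_inner_comm]
        conv at hk => rhs; rw [real_inner_comm]
        exact hk
      exact Subtype.ext (b.repr.injective hrepr)
    obtain ⟨k, hk⟩ := this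
    exact ⟨coord k, ⟨coord k, Algebra.subset_adjoin ⟨k, rfl⟩, rfl⟩, hk⟩
  -- integrals of elements of A agree
  have hint : ∀ g : C(F, ℝ), Integrable g ν₁ ∧ Integrable g ν₂ := fun g =>
    ⟨g.integrable_of_compact ν₁, g.integrable_of_compact ν₂⟩
  have hmomF : ∀ a : ℕ →₀ ℕ,
      ∫ x : F, (∏ k ∈ a.support, ⟪(x : H), b k⟫ ^ a k) ∂ν₁ =
      ∫ x : F, (∏ k ∈ a.support, ⟪(x : H), b k⟫ ^ a k) ∂ν₂ := by
    intro a
    have h₁ := hemb.integral_map (μ := ν₁)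
      (g := fun f : H => ∏ k ∈ a.support, ⟪f, b k⟫ ^ a k)
    have h₂ := hemb.integral_map (μ := ν₂)
      (g := fun f : H => ∏ k ∈ a.support, ⟪f, b k⟫ ^ a k)
    rw [hmap₁] at h₁; rw [hmap₂] at h₂
    rw [← h₁, ← h₂]
    exact hmom a
  have hAint : ∀ g ∈ A, ∫ x, g x ∂ν₁ = ∫ x, g x ∂ν₂ := by
    intro g hg
    have hg' : g ∈ Submodule.span ℝ ((Submonoid.closure (Set.range coord) : Submonoid C(F, ℝ)) :
        Set C(F, ℝ)) := by
      rw [← Algebra.adjoin_eq_span]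
      exact hg
    clear hg
    induction hg' using Submodule.span_induction with
    | mem g hgmem =>
      -- g is a product of coordinate functions, hence a monomial
      have : ∃ a : ℕ →₀ ℕ, ∀ x : F,
          g x = ∏ k ∈ a.support, ⟪(x : H), b k⟫ ^ a k := by
        induction hgmem using Submonoid.closure_induction with
        | mem g hgen =>
          obtain ⟨k, rfl⟩ := hgen
          refine ⟨Finsupp.single k 1, fun x => ?_⟩
          rw [Finsupp.support_single_ne_zero k one_ne_zero]
          simp [hcoord]
        | one => exact ⟨0, fun x => by simp⟩
        | mul g₁ g₂ _ _ ih₁ ih₂ =>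
          obtain ⟨a₁, h₁⟩ := ih₁
          obtain ⟨a₂, h₂⟩ := ih₂
          exact ⟨a₁ + a₂, fun x => by
            rw [ContinuousMap.mul_apply, h₁ x, h₂ x, monomial_mul]⟩
      obtain ⟨a, ha⟩ := this
      simp only [ha]
      exact hmomF a
    | zero => simp
    | add g₁ g₂ _ _ ih₁ ih₂ =>
      simp only [ContinuousMap.add_apply]
      rw [integral_add (hint g₁).1 (hint g₂).1, integral_add (hint g₁).2 (hint g₂).2,
        ih₁, ih₂]
    | smul c g _ ih =>
      simp only [ContinuousMap.smul_apply, smul_eq_mul]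
      rw [integral_const_mul, integral_const_mul, ih]
  -- the set of functions with equal integrals is closed
  have hlip : ∀ ν : Measure F, IsFiniteMeasure ν →
      LipschitzWith (ν Set.univ).toNNReal (fun g : C(F, ℝ) => ∫ x, g x ∂ν) := by
    intro ν hν
    apply LipschitzWith.of_dist_le_mul
    intro g h
    rw [Real.dist_eq, ← integral_sub (g.integrable_of_compact ν) (h.integrable_of_compact ν)]
    have : (fun x => g x - h x) = ⇑(BoundedContinuousFunction.mkOfCompact (g - h)) := by
      ext x; simp
    rw [this]
    calc ‖∫ x, (BoundedContinuousFunction.mkOfCompact (g - h)) x ∂ν‖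
        ≤ (ν Set.univ).toReal * ‖BoundedContinuousFunction.mkOfCompact (g - h)‖ :=
          BoundedContinuousFunction.norm_integral_le_mul_norm ν _
      _ = (ν Set.univ).toNNReal * dist g h := by
          rw [BoundedContinuousFunction.norm_mkOfCompact, dist_eq_norm,
            ENNReal.toReal]
  have hclosed : IsClosed {g : C(F, ℝ) | ∫ x, g x ∂ν₁ = ∫ x, g x ∂ν₂} :=
    isClosed_eq (hlip ν₁ inferInstance).continuous (hlip ν₂ inferInstance).continuous
  have hdense : A.topologicalClosure = ⊤ :=
    ContinuousMap.subalgebra_topologicalClosure_eq_top_of_separatesPoints A hsep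
  have hall : ∀ g : C(F, ℝ), ∫ x, g x ∂ν₁ = ∫ x, g x ∂ν₂ := by
    intro g
    have hg : g ∈ A.topologicalClosure := by rw [hdense]; trivial
    have hsub : (A : Set C(F, ℝ)) ⊆ {g : C(F, ℝ) | ∫ x, g x ∂ν₁ = ∫ x, g x ∂ν₂} :=
      fun p hp => hAint p hp
    exact closure_minimal hsub hclosed hg
  -- conclude ν₁ = ν₂
  have hν : ν₁ = ν₂ := by
    apply ext_of_forall_lintegral_eq_of_IsFiniteMeasure
    intro f
    have hcont : Continuous fun x : F => ((f x : ℝ)) :=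
      NNReal.continuous_coe.comp f.continuous
    have key := hall ⟨fun x => (f x : ℝ), hcont⟩
    have hint₁ : Integrable (fun x : F => ((f x : ℝ))) ν₁ :=
      (ContinuousMap.mk _ hcont).integrable_of_compact ν₁
    have hint₂ : Integrable (fun x : F => ((f x : ℝ))) ν₂ :=
      (ContinuousMap.mk _ hcont).integrable_of_compact ν₂
    rw [lintegral_coe_eq_integral f hint₁, lintegral_coe_eq_integral f hint₂]
    have : (∫ x, ((f x : ℝ)) ∂ν₁) = ∫ x, ((f x : ℝ)) ∂ν₂ := key
    rw [this]
  rw [← hmap₁, ← hmap₂, hν]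
end

section
/- For every h ∈ F and every d, n, the Christoffel function satisfies the lower bound Λ^μ_{d,n}(h) ≥ μ({h}); moreover lim_{min(d,n)→∞} Λ^μ_{d,n}(h) = μ({h}). -/
open MeasureTheory
open scoped RealInnerProductSpace

/-- The space `P_{d,n}` of polynomials on `H` of algebraic degree at most `d` and
harmonic degree at most `n`. -/
noncomputable def Pspace {H : Type*} [NormedAddCommGroup H] [InnerProductSpace ℝ H]
    (b : HilbertBasis ℕ ℝ H) (d n : ℕ) : Submodule ℝ (H → ℝ) :=
  Submodule.span ℝ {p : H → ℝ | ∃ a : ℕ →₀ ℕ,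
    (∀ k ∈ a.support, k < n) ∧ (a.sum fun _ m => m) ≤ d ∧
    p = fun f => ∏ k ∈ a.support, ⟪f, b k⟫ ^ a k}

/-- The Christoffel function `Λ^μ_{d,n}(h) = inf {∫ p² dμ : p ∈ P_{d,n}, p(h) = 1}`. -/
noncomputable def Lam {H : Type*} [NormedAddCommGroup H] [InnerProductSpace ℝ H]
    [MeasurableSpace H]
    (b : HilbertBasis ℕ ℝ H) (μ : Measure H) (d n : ℕ) (h : H) : ℝ :=
  sInf {y : ℝ | ∃ p ∈ Pspace b d n, p h = 1 ∧ y = ∫ f, (p f) ^ 2 ∂μ}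

section Aux

variable {H : Type*} [NormedAddCommGroup H] [InnerProductSpace ℝ H] (b : HilbertBasis ℕ ℝ H)

lemma Pspace_mono {d n d' n' : ℕ} (hd : d ≤ d') (hn : n ≤ n') :
    Pspace b d n ≤ Pspace b d' n' := by
  apply Submodule.span_mono
  rintro p ⟨a, h1, h2, rfl⟩
  exact ⟨a, fun k hk => lt_of_lt_of_le (h1 k hk) hn, h2.trans hd, rfl⟩

lemma one_mem_Pspace (d n : ℕ) : (fun _ : H => (1:ℝ)) ∈ Pspace b d n :=
  Submodule.subset_span ⟨0, by simp, by simp, by funext f; simp⟩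

lemma coord_mem_Pspace {k n d : ℕ} (hk : k < n) (hd : 1 ≤ d) :
    (fun f : H => ⟪f, b k⟫) ∈ Pspace b d n := by
  refine Submodule.subset_span ⟨Finsupp.single k 1, ?_, ?_, ?_⟩
  · intro j hj
    rw [Finsupp.support_single_ne_zero k one_ne_zero, Finset.mem_singleton] at hj
    exact hj ▸ hk
  · simpa using hd
  · funext f
    rw [Finsupp.support_single_ne_zero k one_ne_zero]
    simp

lemma mul_mem_Pspace {p q : H → ℝ} {d e n : ℕ} (hp : p ∈ Pspace b d n)
    (hq : q ∈ Pspace b e n) : p * q ∈ Pspace b (d + e) n := by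
  have hmem := Submodule.mul_mem_mul hp hq
  rw [Pspace, Pspace, Submodule.span_mul_span] at hmem
  refine Submodule.span_mono ?_ hmem
  rintro r hr
  rw [Set.mem_mul] at hr
  obtain ⟨x, ⟨a, ha1, ha2, rfl⟩, y, ⟨a', hb1, hb2, rfl⟩, rfl⟩ := hr
  refine ⟨a + a', ?_, ?_, ?_⟩
  · intro k hk
    rcases Finset.mem_union.1 (Finsupp.support_add hk) with hk' | hk'
    · exact ha1 k hk'
    · exact hb1 k hk'
  · rw [Finsupp.sum_add_index' (fun _ => rfl) (fun _ _ _ => rfl)]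
    exact add_le_add ha2 hb2
  · funext f
    show (∏ k ∈ a.support, ⟪f, b k⟫ ^ a k) * (∏ k ∈ a'.support, ⟪f, b k⟫ ^ a' k)
      = ∏ k ∈ (a + a').support, ⟪f, b k⟫ ^ (a + a') k
    rw [show (∏ k ∈ (a+a').support, ⟪f, b k⟫ ^ (a+a') k)
        = (a + a').prod (fun k m => ⟪f, b k⟫ ^ m) from rfl,
      Finsupp.prod_add_index' (fun _ => pow_zero _) (fun _ _ _ => pow_add _ _ _)]
    rfl

lemma pow_mem_Pspace {p : H → ℝ} {d n : ℕ} (hp : p ∈ Pspace b d n) (D : ℕ) :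
    p ^ D ∈ Pspace b (d * D) n := by
  induction D with
  | zero => simp only [pow_zero, Nat.mul_zero]; exact one_mem_Pspace b 0 n
  | succ D ih =>
      have := mul_mem_Pspace b ih hp
      rw [pow_succ]
      simpa [Nat.mul_succ] using this

lemma continuous_of_mem_Pspace {p : H → ℝ} {d n : ℕ} (hp : p ∈ Pspace b d n) :
    Continuous p := by
  induction hp using Submodule.span_induction with
  | mem x hx =>
      obtain ⟨a, -, -, rfl⟩ := hx
      exact continuous_finset_prod _ fun k _ =>
        ((continuous_id.inner continuous_const)).pow _
  | zero => exact continuous_const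
  | add x y hx hy hx' hy' => exact hx'.add hy'
  | smul a x hx hx' => exact hx'.const_smul a

end Aux

set_option maxHeartbeats 1000000 in
/-- For every `h ∈ F`, `Λ^μ_{d,n}(h) ≥ μ({h})` for all `d, n`, and
`Λ^μ_{d,n}(h) → μ({h})` as `min(d,n) → ∞`. -/
theorem Lam_tendsto_measure_singleton
    {H : Type*} [NormedAddCommGroup H] [InnerProductSpace ℝ H] [CompleteSpace H]
    [MeasurableSpace H] [BorelSpace H]
    (b : HilbertBasis ℕ ℝ H) (F : Set H) (hF : IsCompact F)
    (μ : Measure H) [IsProbabilityMeasure μ] (hsupp : μ Fᶜ = 0)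
    (h : H) (hh : h ∈ F) :
    (∀ d n : ℕ, (μ {h}).toReal ≤ Lam b μ d n h) ∧
    (∀ ε : ℝ, 0 < ε → ∃ m : ℕ, ∀ d n : ℕ, m ≤ d → m ≤ n →
      Lam b μ d n h ≤ (μ {h}).toReal + ε) := by
  have hFm : MeasurableSet F := hF.isClosed.measurableSet
  have haeF : ∀ᵐ x ∂μ, x ∈ F := by
    rw [MeasureTheory.ae_iff]
    simpa [Set.compl_def] using hsupp
  -- integrability of squares of elements of Pspace
  have hint : ∀ {p : H → ℝ} {d n : ℕ}, p ∈ Pspace b d n →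
      Integrable (fun f => p f ^ 2) μ := by
    intro p d n hp
    have hc : Continuous p := continuous_of_mem_Pspace b hp
    obtain ⟨C, hC⟩ := hF.exists_bound_of_continuousOn hc.continuousOn
    refine (integrable_const (C ^ 2)).mono' ((hc.pow 2).aestronglyMeasurable) ?_
    filter_upwards [haeF] with f hf
    have h1 : ‖p f‖ ≤ C := hC f hf
    have : ‖p f ^ 2‖ = ‖p f‖ ^ 2 := by
      rw [Real.norm_eq_abs, Real.norm_eq_abs, abs_pow]
    rw [this]
    exact pow_le_pow_left₀ (norm_nonneg _) h1 2
  constructor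
  · -- lower bound
    intro d n
    apply le_csInf
    · exact ⟨∫ f, ((fun _ : H => (1:ℝ)) f) ^ 2 ∂μ, (fun _ => 1), one_mem_Pspace b d n,
        rfl, rfl⟩
    · rintro y ⟨p, hp, hph, rfl⟩
      have hind : Integrable (Set.indicator {h} (fun _ : H => (1:ℝ))) μ :=
        (integrable_const 1).indicator (measurableSet_singleton h)
      have hle : ∀ f, Set.indicator {h} (fun _ : H => (1:ℝ)) f ≤ p f ^ 2 := by
        intro f
        by_cases hfh : f ∈ ({h} : Set H)
        · rw [Set.indicator_of_mem hfh]
          rcases hfh with rfl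
          rw [hph]; norm_num
        · rw [Set.indicator_of_notMem hfh]
          exact sq_nonneg _
      calc (μ {h}).toReal
          = ∫ f, Set.indicator {h} (fun _ : H => (1:ℝ)) f ∂μ := by
            rw [show (Set.indicator {h} (fun _ : H => (1:ℝ))) = Set.indicator {h} 1 from rfl,
              integral_indicator_one (measurableSet_singleton h)]; rfl
        _ ≤ ∫ f, p f ^ 2 ∂μ := integral_mono hind (hint hp) hle
  · -- upper bound
    intro ε hε
    -- radius
    obtain ⟨r0, hr0⟩ := hF.isBounded.subset_closedBall h
    set R : ℝ := max r0 1 with hRdef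
    have hR1 : (1:ℝ) ≤ R := le_max_right _ _
    have hR0 : (0:ℝ) < R := lt_of_lt_of_le one_pos hR1
    have hFR : ∀ f ∈ F, ‖f - h‖ ≤ R := by
      intro f hf
      have := hr0 hf
      rw [Metric.mem_closedBall, dist_eq_norm] at this
      exact this.trans (le_max_left _ _)
    set c : ℝ := (R ^ 2)⁻¹ with hcdef
    have hc0 : 0 < c := inv_pos.2 (by positivity)
    -- truncated squared distance
    set N : ℕ → H → ℝ := fun n f => ∑ k ∈ Finset.range n, ⟪f - h, b k⟫ ^ 2 with hNdef
    have hNnonneg : ∀ n f, 0 ≤ N n f := fun n f =>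
      Finset.sum_nonneg fun k _ => sq_nonneg _
    have hNcont : ∀ n, Continuous (N n) := fun n =>
      continuous_finset_sum _ fun k _ =>
        ((continuous_id.sub continuous_const).inner continuous_const).pow 2
    have hParseval : ∀ f : H, HasSum (fun k => ⟪f - h, b k⟫ ^ 2) (‖f - h‖ ^ 2) := by
      intro f
      have h2 := b.hasSum_inner_mul_inner (f - h) (f - h)
      rw [real_inner_self_eq_norm_sq] at h2
      have h3 : (fun k => ⟪f - h, b k⟫ * ⟪b k, f - h⟫)
          = fun k => ⟪f - h, b k⟫ ^ 2 := by
        funext k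
        rw [real_inner_comm (b k) (f - h), sq]
      rwa [h3] at h2
    have hNle : ∀ n, ∀ f : H, N n f ≤ ‖f - h‖ ^ 2 := fun n f =>
      sum_le_hasSum _ (fun k _ => sq_nonneg _) (hParseval f)
    have hNmono : ∀ {n m : ℕ}, n ≤ m → ∀ f, N n f ≤ N m f := by
      intro n m hnm f
      exact Finset.sum_le_sum_of_subset_of_nonneg
        (Finset.range_subset_range.2 hnm) (fun k _ _ => sq_nonneg _)
    -- Q n f := 1 - c * N n f, bounds on F
    set Q : ℕ → H → ℝ := fun n f => 1 - c * N n f with hQdef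
    have hQle1 : ∀ n f, Q n f ≤ 1 := by
      intro n f
      have : 0 ≤ c * N n f := mul_nonneg hc0.le (hNnonneg n f)
      simp only [hQdef]; linarith
    have hQ0 : ∀ n, ∀ f ∈ F, 0 ≤ Q n f := by
      intro n f hf
      have h1 : N n f ≤ R ^ 2 := (hNle n f).trans
        (pow_le_pow_left₀ (norm_nonneg _) (hFR f hf) 2)
      have h2 : c * N n f ≤ c * R ^ 2 := mul_le_mul_of_nonneg_left h1 hc0.le
      have h3 : c * R ^ 2 = 1 := inv_mul_cancel₀ (by positivity)
      simp only [hQdef]; linarith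
    -- shells
    set S : ℕ → Set H := fun k => {h}ᶜ ∩ Metric.closedBall h (1 / (k + 1)) with hSdef
    have hSmeas : ∀ k, MeasurableSet (S k) :=
      fun k => (measurableSet_singleton h).compl.inter measurableSet_closedBall
    have hSanti : Antitone S := by
      intro k k' hkk'
      apply Set.inter_subset_inter_right
      apply Metric.closedBall_subset_closedBall
      apply one_div_le_one_div_of_le (by positivity)
      exact_mod_cast add_le_add_left (Nat.cast_le.2 hkk') 1
    have hSempty : ⋂ k, S k = ∅ := by
      ext f
      simp only [Set.mem_iInter, Set.mem_empty_iff_false, iff_false, not_forall]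
      by_cases hfh : f = h
      · exact ⟨0, by simp [hSdef, hfh]⟩
      · obtain ⟨k, hk⟩ := exists_nat_one_div_lt
          (dist_pos.2 hfh)
        refine ⟨k, ?_⟩
        simp only [hSdef, Set.mem_inter_iff, Metric.mem_closedBall, not_and_or]
        right
        push_cast at hk ⊢
        linarith
    have hStend : Filter.Tendsto (fun k => μ (S k)) Filter.atTop (nhds 0) := by
      have := tendsto_measure_iInter_atTop
        (fun k => (hSmeas k).nullMeasurableSet) hSanti ⟨0, measure_ne_top μ _⟩
      rwa [hSempty, measure_empty] at this
    have hofReal : (0 : ENNReal) < ENNReal.ofReal (ε/2) := by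
      rw [ENNReal.ofReal_pos]; linarith
    obtain ⟨k₀, hk₀⟩ := (hStend.eventually_lt_const hofReal).exists
    set δ : ℝ := 1 / (k₀ + 1) with hδdef
    have hδ0 : 0 < δ := by positivity
    have hδ1 : δ ≤ 1 := by
      rw [hδdef, div_le_one (by positivity)]
      push_cast; linarith [Nat.cast_nonneg (α := ℝ) k₀]
    -- compact outer set and cover
    set K : Set H := F ∩ {f | δ ≤ dist f h} with hKdef
    have hKcl : IsClosed {f : H | δ ≤ dist f h} :=
      isClosed_le continuous_const (continuous_id.dist continuous_const)
    have hKcomp : IsCompact K := hF.inter_right hKcl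
    set U : ℕ → Set H := fun n => {f | δ ^ 2 / 2 < N n f} with hUdef
    have hUopen : ∀ n, IsOpen (U n) := fun n => isOpen_lt continuous_const (hNcont n)
    have hUmono : ∀ {n m : ℕ}, n ≤ m → U n ⊆ U m := by
      intro n m hnm f hf
      exact lt_of_lt_of_le hf (hNmono hnm f)
    have hKcover : K ⊆ ⋃ n, U n := by
      intro f hf
      have hdist : δ ≤ dist f h := hf.2
      have hlt : δ ^ 2 / 2 < ‖f - h‖ ^ 2 := by
        have h1 : δ ^ 2 ≤ dist f h ^ 2 := pow_le_pow_left₀ hδ0.le hdist 2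
        rw [← dist_eq_norm]
        nlinarith [sq_nonneg δ]
      obtain ⟨n, hn⟩ := ((hParseval f).tendsto_sum_nat.eventually_const_lt hlt).exists
      exact Set.mem_iUnion.2 ⟨n, hn⟩
    obtain ⟨t, ht⟩ := hKcomp.elim_finite_subcover U hUopen hKcover
    set n₀ : ℕ := t.sup id with hn₀def
    have hKU : K ⊆ U n₀ := by
      intro f hf
      obtain ⟨i, hit, hfi⟩ := Set.mem_iUnion₂.1 (ht hf)
      exact hUmono (Finset.le_sup (f := id) hit) hfi
    -- choose the exponent
    set r : ℝ := 1 - c * (δ ^ 2 / 2) with hrdef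
    have hrlt1 : r < 1 := by
      have : 0 < c * (δ ^ 2 / 2) := by positivity
      simp only [hrdef]; linarith
    have hr0 : 0 ≤ r := by
      have h1 : δ ^ 2 / 2 ≤ R ^ 2 := by nlinarith
      have h2 : c * (δ ^ 2 / 2) ≤ c * R ^ 2 := mul_le_mul_of_nonneg_left h1 hc0.le
      have h3 : c * R ^ 2 = 1 := inv_mul_cancel₀ (by positivity)
      simp only [hrdef]; linarith
    obtain ⟨D, hD⟩ := ((tendsto_pow_atTop_nhds_zero_of_lt_one hr0 hrlt1).eventually_lt_const
      (by linarith : (0:ℝ) < ε / 2)).exists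
    -- the polynomial
    set p : H → ℝ := (fun f => Q n₀ f) ^ D with hpdef
    have hpapp : ∀ f, p f = Q n₀ f ^ D := fun f => rfl
    have hQmem : (fun f => Q n₀ f) ∈ Pspace b 2 n₀ := by
      have hsq : ∀ k, k < n₀ → (fun f : H => ⟪f - h, b k⟫ ^ 2) ∈ Pspace b 2 n₀ := by
        intro k hk
        have hlin : (fun f : H => ⟪f - h, b k⟫) ∈ Pspace b 1 n₀ := by
          have heq : (fun f : H => ⟪f - h, b k⟫)
              = (fun f : H => ⟪f, b k⟫) - ⟪h, b k⟫ • (fun _ : H => (1:ℝ)) := by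
            funext f
            simp [inner_sub_left, smul_eq_mul]
          rw [heq]
          exact Submodule.sub_mem _ (coord_mem_Pspace b hk le_rfl)
            (Submodule.smul_mem _ _ (one_mem_Pspace b 1 n₀))
        have := mul_mem_Pspace b hlin hlin
        have heq2 : (fun f : H => ⟪f - h, b k⟫) * (fun f : H => ⟪f - h, b k⟫)
            = fun f : H => ⟪f - h, b k⟫ ^ 2 := by
          funext f; simp [sq]
        rwa [heq2] at this
      have hNmem : (fun f => N n₀ f) ∈ Pspace b 2 n₀ := by
        have heq : (fun f => N n₀ f)
            = ∑ k ∈ Finset.range n₀, (fun f : H => ⟪f - h, b k⟫ ^ 2) := by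
          funext f
          simp [hNdef, Finset.sum_apply]
        rw [heq]
        exact Submodule.sum_mem _ fun k hk => hsq k (Finset.mem_range.1 hk)
      have heq : (fun f => Q n₀ f)
          = (fun _ : H => (1:ℝ)) + (-c) • (fun f => N n₀ f) := by
        funext f
        simp [hQdef, smul_eq_mul]
        ring
      rw [heq]
      exact Submodule.add_mem _ (one_mem_Pspace b 2 n₀)
        (Submodule.smul_mem _ _ hNmem)
    have hpmem : p ∈ Pspace b (2 * D) n₀ := pow_mem_Pspace b hQmem D
    have hNh : N n₀ h = 0 := by
      simp [hNdef]
    have hph : p h = 1 := by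
      rw [hpapp]
      simp [hQdef, hNh]
    refine ⟨max (2 * D) n₀, fun d n hd hn => ?_⟩
    have hpmem' : p ∈ Pspace b d n :=
      Pspace_mono b (le_trans (le_max_left _ _) hd) (le_trans (le_max_right _ _) hn) hpmem
    have hgint : Integrable (fun f => p f ^ 2) μ := hint hpmem'
    -- estimate the integral
    have hbound : ∫ f, p f ^ 2 ∂μ ≤ (μ {h}).toReal + ε := by
      have hmeasA : MeasurableSet ((F \ {h}) ∩ K) :=
        (hFm.diff (measurableSet_singleton h)).inter
          (hKcomp.isClosed.measurableSet)
      have hmeasB : MeasurableSet ((F \ {h}) \ K) :=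
        (hFm.diff (measurableSet_singleton h)).diff hKcomp.isClosed.measurableSet
      -- pointwise bounds
      have hgF : ∀ f ∈ F, p f ^ 2 ≤ 1 := by
        intro f hf
        rw [hpapp]
        have h1 : Q n₀ f ^ D ≤ 1 := pow_le_one₀ (hQ0 n₀ f hf) (hQle1 n₀ f)
        have h0 : 0 ≤ Q n₀ f ^ D := pow_nonneg (hQ0 n₀ f hf) D
        nlinarith
      have hgK : ∀ f ∈ (F \ {h}) ∩ K, p f ^ 2 ≤ r ^ D := by
        intro f hf
        have hfF : f ∈ F := hf.1.1
        have hfU : f ∈ U n₀ := hKU hf.2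
        have hQr : Q n₀ f ≤ r := by
          have : c * (δ ^ 2 / 2) ≤ c * N n₀ f :=
            mul_le_mul_of_nonneg_left (le_of_lt hfU) hc0.le
          simp only [hQdef, hrdef]; linarith
        rw [hpapp]
        have h1 : Q n₀ f ^ D ≤ r ^ D := pow_le_pow_left₀ (hQ0 n₀ f hfF) hQr D
        have h2 : r ^ D ≤ 1 := pow_le_one₀ hr0 hrlt1.le
        have h0 : 0 ≤ Q n₀ f ^ D := pow_nonneg (hQ0 n₀ f hfF) D
        nlinarith
      -- split the integral
      have hsplit0 : ∫ f, p f ^ 2 ∂μ = ∫ f in F, p f ^ 2 ∂μ := by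
        rw [Measure.restrict_eq_self_of_ae_mem haeF]
      have hsplit1 : ∫ f in F, p f ^ 2 ∂μ
          = (∫ f in {h}, p f ^ 2 ∂μ) + ∫ f in F \ {h}, p f ^ 2 ∂μ := by
        rw [← setIntegral_union (Set.disjoint_sdiff_right)
          (hFm.diff (measurableSet_singleton h)) hgint.integrableOn hgint.integrableOn,
          Set.union_diff_cancel (Set.singleton_subset_iff.2 hh)]
      have hdisjAB : Disjoint ((F \ {h}) ∩ K) ((F \ {h}) \ K) := by
        rw [Set.disjoint_left]
        rintro f ⟨-, hfK⟩ ⟨-, hfK'⟩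
        exact hfK' hfK
      have hsplit2 : ∫ f in F \ {h}, p f ^ 2 ∂μ
          = (∫ f in (F \ {h}) ∩ K, p f ^ 2 ∂μ) + ∫ f in (F \ {h}) \ K, p f ^ 2 ∂μ := by
        rw [← setIntegral_union hdisjAB hmeasB hgint.integrableOn hgint.integrableOn,
          Set.inter_union_diff]
      have hto1 : ∀ s : Set H, (μ s).toReal ≤ 1 := by
        intro s
        have h1 : μ s ≤ 1 := prob_le_one
        have := ENNReal.toReal_mono (by norm_num) h1
        simpa using this
      have hI1 : ∫ f in {h}, p f ^ 2 ∂μ ≤ (μ {h}).toReal := by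
        have hpt : ∀ f ∈ ({h} : Set H), p f ^ 2 ≤ (fun _ : H => (1:ℝ)) f := by
          rintro f hf
          rcases hf with rfl
          rw [hpapp]
          simp [hQdef, hNh]
        have hmono := setIntegral_mono_on hgint.integrableOn
          (integrableOn_const (measure_ne_top μ _))
          (measurableSet_singleton h) hpt
        calc ∫ f in {h}, p f ^ 2 ∂μ ≤ ∫ _ in {h}, (1:ℝ) ∂μ := hmono
          _ = (μ {h}).toReal := by rw [setIntegral_const]; simp; rfl
      have hI2 : ∫ f in (F \ {h}) ∩ K, p f ^ 2 ∂μ ≤ r ^ D := by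
        have hmono := setIntegral_mono_on hgint.integrableOn
          (integrableOn_const (measure_ne_top μ _)) hmeasA hgK
        calc ∫ f in (F \ {h}) ∩ K, p f ^ 2 ∂μ
            ≤ ∫ _ in (F \ {h}) ∩ K, r ^ D ∂μ := hmono
          _ = (μ ((F \ {h}) ∩ K)).toReal * r ^ D := by
              rw [setIntegral_const]; rw [smul_eq_mul]; rfl
          _ ≤ 1 * r ^ D := mul_le_mul_of_nonneg_right (hto1 _) (pow_nonneg hr0 D)
          _ = r ^ D := one_mul _
      have hBsub : (F \ {h}) \ K ⊆ S k₀ := by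
        rintro f ⟨⟨hfF, hfh⟩, hfK⟩
        have hdist : ¬ δ ≤ dist f h := fun hc => hfK ⟨hfF, hc⟩
        refine ⟨hfh, ?_⟩
        rw [Metric.mem_closedBall]
        have := not_le.1 hdist
        rw [hδdef] at this
        linarith
      have hI3 : ∫ f in (F \ {h}) \ K, p f ^ 2 ∂μ ≤ (μ (S k₀)).toReal := by
        have hpt : ∀ f ∈ (F \ {h}) \ K, p f ^ 2 ≤ (fun _ : H => (1:ℝ)) f :=
          fun f hf => hgF f hf.1.1
        have hmono := setIntegral_mono_on hgint.integrableOn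
          (integrableOn_const (measure_ne_top μ _)) hmeasB hpt
        calc ∫ f in (F \ {h}) \ K, p f ^ 2 ∂μ
            ≤ ∫ _ in (F \ {h}) \ K, (1:ℝ) ∂μ := hmono
          _ = (μ ((F \ {h}) \ K)).toReal := by rw [setIntegral_const]; simp; rfl
          _ ≤ (μ (S k₀)).toReal :=
              ENNReal.toReal_mono (measure_ne_top μ _) (measure_mono hBsub)
      have hS2 : (μ (S k₀)).toReal < ε / 2 :=
        (ENNReal.lt_ofReal_iff_toReal_lt (measure_ne_top μ _)).1 hk₀
      rw [hsplit0, hsplit1, hsplit2]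
      linarith
    calc Lam b μ d n h ≤ ∫ f, p f ^ 2 ∂μ := by
          apply csInf_le
          · refine ⟨0, ?_⟩
            rintro y ⟨p', -, -, rfl⟩
            exact integral_nonneg fun f => sq_nonneg _
          · exact ⟨p, hpmem', hph, rfl⟩
      _ ≤ (μ {h}).toReal + ε := hbound
end

section
/- Christoffel function update formula: with notation as in the rank-one update, for all g ∈ H: Λ^{μ_{N+1}}_{d,n}(g)⁻¹/(N+1) = Λ^{μ_N}_{d,n}(g)⁻¹/N − ((1/N²) K^{μ_N}_{d,n}(g,g₀)²) / (1 + (1/N) Λ^{μ_N}_{d,n}(g₀)⁻¹). -/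
open Matrix

section Aux

variable {m : Type*} [Fintype m]

lemma aux_mul_vecMulVec (A : Matrix m m ℝ) (a b : m → ℝ) :
    A * vecMulVec a b = vecMulVec (A *ᵥ a) b := by
  ext i j
  simp only [mul_apply, vecMulVec_apply, mulVec, dotProduct, Finset.sum_mul, mul_assoc]

lemma aux_vecMulVec_mul (a b : m → ℝ) (A : Matrix m m ℝ) :
    vecMulVec a b * A = vecMulVec a (b ᵥ* A) := by
  ext i j
  simp only [mul_apply, vecMulVec_apply, vecMul, dotProduct, Finset.mul_sum, mul_assoc]

lemma aux_vecMulVec_mul_vecMulVec (a b c d : m → ℝ) :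
    vecMulVec a b * vecMulVec c d = (b ⬝ᵥ c) • vecMulVec a d := by
  ext i j
  simp only [mul_apply, vecMulVec_apply, dotProduct, Matrix.smul_apply, smul_eq_mul, Finset.sum_mul]
  exact Finset.sum_congr rfl fun k _ => by ring

lemma aux_vecMulVec_mulVec (a b x : m → ℝ) :
    vecMulVec a b *ᵥ x = (b ⬝ᵥ x) • a := by
  ext i
  simp only [mulVec, vecMulVec_apply, dotProduct, Pi.smul_apply, smul_eq_mul, Finset.sum_mul]
  exact Finset.sum_congr rfl fun k _ => by ring

lemma aux_dotProduct_sum {ι : Type*} (x : m → ℝ) (s : Finset ι) (f : ι → m → ℝ) :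
    x ⬝ᵥ (∑ i ∈ s, f i) = ∑ i ∈ s, x ⬝ᵥ f i := by
  simp only [dotProduct, Finset.sum_apply, Finset.mul_sum]
  exact Finset.sum_comm

omit [Fintype m] in
lemma aux_vecMulVec_smul_left (r : ℝ) (a b : m → ℝ) :
    vecMulVec (r • a) b = r • vecMulVec a b := by
  ext i j
  simp [vecMulVec_apply, mul_assoc]

end Aux

/-- Christoffel function update formula: with `M_N = (1/N) Σ_i v(g_i) v(g_i)ᵀ`
invertible, `M_{N+1} = (1/(N+1)) (Σ_i v(g_i) v(g_i)ᵀ + v(g₀) v(g₀)ᵀ)` after adding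
the point `g₀`, `K(f,g) = v(f)ᵀ M_N⁻¹ v(g)` and `Λ^μ_{d,n}(g)⁻¹ = K(g,g)`, for all
`g`: `Λ^{μ_{N+1}}(g)⁻¹/(N+1) = Λ^{μ_N}(g)⁻¹/N - (1/N²) K(g,g₀)² / (1 + (1/N) Λ^{μ_N}(g₀)⁻¹)`. -/
theorem christoffel_update_formula
    {H : Type*} [NormedAddCommGroup H] [InnerProductSpace ℝ H]
    {m N : ℕ} (hN : 0 < N)
    (vmap : H → Fin m → ℝ) (gs : Fin N → H) (g₀ : H)
    (M : Matrix (Fin m) (Fin m) ℝ)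
    (hM : M = (N : ℝ)⁻¹ • ∑ i, vecMulVec (vmap (gs i)) (vmap (gs i)))
    (hMinv : IsUnit M.det)
    (M' : Matrix (Fin m) (Fin m) ℝ)
    (hM' : M' = ((N : ℝ) + 1)⁻¹ •
      (∑ i, vecMulVec (vmap (gs i)) (vmap (gs i)) + vecMulVec (vmap g₀) (vmap g₀))) :
    ∀ g : H,
      (vmap g ⬝ᵥ (M'⁻¹ *ᵥ vmap g)) / ((N : ℝ) + 1) =
        (vmap g ⬝ᵥ (M⁻¹ *ᵥ vmap g)) / (N : ℝ) -
        ((N : ℝ) ^ 2)⁻¹ * (vmap g ⬝ᵥ (M⁻¹ *ᵥ vmap g₀)) ^ 2 /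
          (1 + (N : ℝ)⁻¹ * (vmap g₀ ⬝ᵥ (M⁻¹ *ᵥ vmap g₀))) := by
  intro g
  have hN0 : (N : ℝ) ≠ 0 := Nat.cast_ne_zero.mpr hN.ne'
  have hN1 : (N : ℝ) + 1 ≠ 0 := by positivity
  set u : Fin m → ℝ := vmap g₀ with hu
  -- M is symmetric
  have hMsymm : Mᵀ = M := by
    rw [hM, transpose_smul, transpose_sum]
    congr 1
    refine Finset.sum_congr rfl fun i _ => ?_
    ext a b
    simp [vecMulVec_apply, mul_comm]
  -- M is positive semidefinite
  have hMpsd : M.PosSemidef := by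
    refine .of_dotProduct_mulVec_nonneg (by simpa [Matrix.IsHermitian] using hMsymm) fun x => ?_
    have hsum : (∑ i, vecMulVec (vmap (gs i)) (vmap (gs i))) *ᵥ x
        = ∑ i, vecMulVec (vmap (gs i)) (vmap (gs i)) *ᵥ x :=
      map_sum (Matrix.mulVec.addMonoidHomLeft x) _ _
    rw [hM, smul_mulVec, dotProduct_smul, hsum]
    have h1 : ∀ i : Fin N, vecMulVec (vmap (gs i)) (vmap (gs i)) *ᵥ x
        = (vmap (gs i) ⬝ᵥ x) • vmap (gs i) := fun i => aux_vecMulVec_mulVec _ _ _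
    simp only [h1]
    rw [aux_dotProduct_sum]
    refine smul_nonneg (by positivity) (Finset.sum_nonneg fun i _ => ?_)
    rw [dotProduct_smul]
    have h2 : star x ⬝ᵥ vmap (gs i) = vmap (gs i) ⬝ᵥ x := by
      simp [dotProduct, mul_comm]
    rw [h2, smul_eq_mul, ← sq]
    positivity
  have hMinvPsd : (M⁻¹).PosSemidef := hMpsd.inv
  have hc : 0 ≤ u ⬝ᵥ (M⁻¹ *ᵥ u) := by simpa using hMinvPsd.dotProduct_mulVec_nonneg u
  set c : ℝ := u ⬝ᵥ (M⁻¹ *ᵥ u) with hcdef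
  have hd : (0 : ℝ) < 1 + (N : ℝ)⁻¹ * c := by positivity
  set d : ℝ := 1 + (N : ℝ)⁻¹ * c with hddef
  -- M⁻¹ is symmetric
  have hMinvsymm : (M⁻¹)ᵀ = M⁻¹ := by
    rw [Matrix.transpose_nonsing_inv, hMsymm]
  have huM : u ᵥ* M⁻¹ = M⁻¹ *ᵥ u := by
    have := Matrix.vecMul_transpose M⁻¹ u
    rwa [hMinvsymm] at this
  -- Sherman-Morrison
  set e : ℝ := ((N : ℝ) ^ 2)⁻¹ / d with hedef
  set B : Matrix (Fin m) (Fin m) ℝ :=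
    (N : ℝ)⁻¹ • M⁻¹ - e • vecMulVec (M⁻¹ *ᵥ u) (M⁻¹ *ᵥ u) with hBdef
  have hMM : M * M⁻¹ = 1 := Matrix.mul_nonsing_inv M hMinv
  have hMMu : M *ᵥ (M⁻¹ *ᵥ u) = u := by
    rw [Matrix.mulVec_mulVec, hMM, Matrix.one_mulVec]
  have hS : (∑ i, vecMulVec (vmap (gs i)) (vmap (gs i))) = (N : ℝ) • M := by
    rw [hM, smul_smul, mul_inv_cancel₀ hN0, one_smul]
  have hde : d * e = ((N : ℝ) ^ 2)⁻¹ := by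
    rw [hedef, mul_div_cancel₀ _ hd.ne']
  have hA0B : ((N : ℝ) • M + vecMulVec u u) * B = 1 := by
    rw [hBdef]
    simp only [add_mul, mul_sub, smul_mul_assoc, Matrix.mul_smul, hMM,
      aux_mul_vecMulVec, hMMu, aux_vecMulVec_mul, huM, aux_vecMulVec_mul_vecMulVec,
      aux_vecMulVec_mulVec, aux_vecMulVec_smul_left, smul_smul, ← hcdef]
    match_scalars
    · field_simp
    · rw [hedef, hddef]
      field_simp
      ring
  have hM'inv : M'⁻¹ = ((N : ℝ) + 1) • B := by
    apply Matrix.inv_eq_right_inv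
    rw [hM', hS, Matrix.smul_mul, Matrix.mul_smul, hA0B, smul_smul,
      inv_mul_cancel₀ hN1, one_smul]
  -- conclude
  rw [hM'inv, hBdef]
  simp only [smul_mulVec, Matrix.sub_mulVec, aux_vecMulVec_mulVec,
    dotProduct_smul, dotProduct_sub, smul_eq_mul]
  have hcomm : (M⁻¹ *ᵥ u) ⬝ᵥ vmap g = vmap g ⬝ᵥ (M⁻¹ *ᵥ u) := dotProduct_comm _ _
  rw [hcomm, hedef]
  field_simp
end
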